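/- arXiv:2408.14330 — 5 statements merged into one kernel-verified Lean document; each statement's English description precedes it below -/
import Mathlib

section
/- Let q = p^w > 2 be a prime power and g₁, g₂, g₃, g₄ primitive elements of F_q. The permutations π_{g₁,g₂} and π_{g₃,g₄} (defined by π_{g,h}(x)=y iff g^x + h^y = 1 on {1,...,q-2}) coincide if and only if there exists j ∈ {0,1,...,w-1} such that g₃ = g₁^{p^j} and g₄ = g₂^{p^j}. -/
/-!
Write `g₃ = g₁ ^ m₁` and `g₄ = g₂ ^ m₂`. If the two permutations agree, then writing every
`a ≠ 0, 1` as a power of `g₁` gives `a ^ m₁ + (1 - a) ^ m₂ = 1` for all `a : F`. Two multiplicative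
maps `f`, `h` of a field with `f a + h (1 - a) = 1` coincide and are additive: `h` is multiplicative
and `(1 - a) * (1 - a / (a - 1)) = 1`, which forces `f a = f (a - 1) + 1`. So `x ↦ x ^ m₁` is a
field endomorphism of `F`, hence a power `x ↦ x ^ p ^ j` (`j < w`) of the Frobenius.
Conversely, a power of the Frobenius carries `g₁ ^ x + g₂ ^ y = 1` to `g₃ ^ x + g₄ ^ y = 1`, and
`y < q - 1` is determined by `g₄ ^ y` because `g₄` is primitive.
-/

theorem exists_ne_zero_pow_eq_of_mem_zpowers {G : Type*} [Group G] [Finite G] {g y : G}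
    (hy : y ∈ Subgroup.zpowers g) : ∃ m ≠ 0, g ^ m = y := by
  obtain ⟨m, rfl⟩ := mem_powers_iff_mem_zpowers.mpr hy
  refine ⟨m + orderOf g, ?_, by rw [pow_add, pow_orderOf_eq_one, mul_one]⟩
  have := (isOfFinOrder_of_finite g).orderOf_pos
  omega

namespace MonoidWithZeroHom

variable {K : Type*} [Field K] (f h : K →*₀ K)

theorem map_eq_map_sub_one_add_one (hfh : ∀ a, f a + h (1 - a) = 1) {a : K} (ha₀ : a ≠ 0)
    (ha₁ : a ≠ 1) : f a = f (a - 1) + 1 := by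
  have hfa₁ : f (a - 1) ≠ 0 := (map_ne_zero f).mpr (sub_ne_zero.mpr ha₁)
  have hunit : (1 - a) * (1 - a / (a - 1)) = 1 := by
    field_simp [sub_ne_zero.mpr ha₁]
    ring
  have key : (1 - f a) * (1 - f a / f (a - 1)) = 1 := by
    rw [← map_div₀, ← eq_sub_of_add_eq' (hfh a), ← eq_sub_of_add_eq' (hfh _), ← map_mul, hunit,
      map_one]
  field_simp at key
  apply mul_left_cancel₀ ((map_ne_zero f).mpr ha₀)
  linear_combination key

theorem map_neg_one_eq_neg_one (hfh : ∀ a, f a + h (1 - a) = 1) : f (-1) = -1 := by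
  by_cases h₂ : (2 : K) = 0
  · have : (-1 : K) = 1 := by linear_combination -h₂
    rw [this, map_one]
  have hneg₁ : (-1 : K) ≠ 1 := fun h' => h₂ (by linear_combination -h')
  have hf₂ : f 2 = 2 := by
    rw [map_eq_map_sub_one_add_one f h hfh h₂ (fun h' => one_ne_zero (by linear_combination h'))]
    norm_num
  have := map_eq_map_sub_one_add_one f h hfh (neg_ne_zero.mpr one_ne_zero) hneg₁
  rw [show (-1 : K) - 1 = -1 * 2 by ring, map_mul, hf₂] at this
  linear_combination -this

theorem map_one_sub_of_add_map_one_sub (hfh : ∀ a, f a + h (1 - a) = 1) (a : K) :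
    f (1 - a) = 1 - f a := by
  by_cases ha₀ : a = 0
  · simp [ha₀]
  by_cases ha₁ : a = 1
  · simp [ha₁]
  rw [map_eq_map_sub_one_add_one f h hfh ha₀ ha₁, show 1 - a = -1 * (a - 1) by ring, map_mul,
    map_neg_one_eq_neg_one f h hfh]
  ring

theorem map_add_of_map_one_sub (hf : ∀ a, f (1 - a) = 1 - f a) (hf₁ : f (-1) = -1) (x y : K) :
    f (x + y) = f x + f y := by
  by_cases hx : x = 0
  · simp [hx]
  calc f (x + y) = f x * f (1 - -1 * (y / x)) := by rw [← map_mul]; congr 1; field_simp; ring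
    _ = f x + f y := by
      rw [hf, map_mul, map_div₀, hf₁]
      field_simp [(map_ne_zero f).mpr hx]
      ring

theorem eq_of_add_map_one_sub (hfh : ∀ a, f a + h (1 - a) = 1) : h = f := by
  ext a
  have := hfh (1 - a)
  rw [sub_sub_cancel, map_one_sub_of_add_map_one_sub f h hfh] at this
  linear_combination this

def ringHomOfAddMapOneSub (hfh : ∀ a, f a + h (1 - a) = 1) : K →+* K :=
  { f with
    map_add' := map_add_of_map_one_sub f (map_one_sub_of_add_map_one_sub f h hfh)
      (map_neg_one_eq_neg_one f h hfh) }

@[simp]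
theorem coe_ringHomOfAddMapOneSub (hfh : ∀ a, f a + h (1 - a) = 1) :
    ⇑(ringHomOfAddMapOneSub f h hfh) = f :=
  rfl

end MonoidWithZeroHom

namespace FiniteField

variable {F : Type*} [Field F] [Fintype F] {g : Fˣ}

theorem orderOf_eq_card_sub_one (hg : ∀ x, x ∈ Subgroup.zpowers g) :
    orderOf g = Fintype.card F - 1 := by
  rw [orderOf_eq_card_of_forall_mem_zpowers hg, Nat.card_units, Nat.card_eq_fintype_card]

theorem exists_mem_Icc_pow_eq (hg : ∀ x, x ∈ Subgroup.zpowers g) {a : F} (ha₀ : a ≠ 0)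
    (ha₁ : a ≠ 1) : ∃ x ∈ Set.Icc 1 (Fintype.card F - 2), (g : F) ^ x = a := by
  classical
  obtain ⟨x, hx, hxa⟩ :=
    Finset.mem_image.mp (mem_zpowers_iff_mem_range_orderOf.mp (hg (Units.mk0 a ha₀)))
  rw [Finset.mem_range, orderOf_eq_card_sub_one hg] at hx
  replace hxa : (g : F) ^ x = a := by simpa using congrArg Units.val hxa
  refine ⟨x, ⟨Nat.one_le_iff_ne_zero.mpr ?_, by omega⟩, hxa⟩
  rintro rfl
  exact ha₁ (by simpa using hxa.symm)

theorem pow_injOn_Iio_card_sub_one (hg : ∀ x, x ∈ Subgroup.zpowers g) :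
    Set.InjOn (fun y => (g : F) ^ y) (Set.Iio (Fintype.card F - 1)) := by
  intro y hy y' hy' hyy'
  rw [Set.mem_Iio, ← orderOf_eq_card_sub_one hg] at hy hy'
  exact pow_injOn_Iio_orderOf hy hy' (Units.ext (by simpa using hyy'))

theorem exists_lt_forall_ringHom_apply_eq_pow {p w : ℕ} (hp : p.Prime) (hcard : Fintype.card F = p ^ w) (σ : F →+* F) :
    ∃ j < w, ∀ x, σ x = x ^ p ^ j := by
  have : Fact p.Prime := ⟨hp⟩
  have : CharP F p := charP_of_card_eq_prime_pow hcard
  let _ : Algebra (ZMod p) F := ZMod.algebra F p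
  have hrank : Module.finrank (ZMod p) F = w :=
    Nat.pow_right_injective hp.two_le (by simpa [hcard] using pow_finrank_eq_card p F)
  let σ' : F →ₐ[ZMod p] F :=
    { σ with commutes' := RingHom.congr_fun (Subsingleton.elim (σ.comp (algebraMap (ZMod p) F)) _) }
  obtain ⟨⟨j, hj⟩, hσ⟩ := (bijective_frobeniusAlgHom_pow (ZMod p) F).2 σ'
  refine ⟨j, hrank ▸ hj, fun x => ?_⟩
  have := DFunLike.congr_fun hσ x
  simp only [AlgHom.coe_pow, coe_frobeniusAlgHom, pow_iterate, ZMod.card] at this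
  exact this.symm

theorem pow_add_one_sub_pow_eq_one {g₁ g₂ : Fˣ}
    (hg₁ : ∀ x, x ∈ Subgroup.zpowers g₁) {m₁ m₂ : ℕ} (hm₁ : m₁ ≠ 0) (hm₂ : m₂ ≠ 0) {π : ℕ → ℕ}
    (h₁ : ∀ x ∈ Set.Icc 1 (Fintype.card F - 2), (g₁ : F) ^ x + (g₂ : F) ^ π x = 1)
    (h₂ : ∀ x ∈ Set.Icc 1 (Fintype.card F - 2), ((g₁ : F) ^ m₁) ^ x + ((g₂ : F) ^ m₂) ^ π x = 1)
    (a : F) : a ^ m₁ + (1 - a) ^ m₂ = 1 := by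
  by_cases ha₀ : a = 0
  · simp [ha₀, hm₁]
  by_cases ha₁ : a = 1
  · simp [ha₁, hm₂]
  obtain ⟨x, hx, rfl⟩ := exists_mem_Icc_pow_eq hg₁ ha₀ ha₁
  rw [← eq_sub_of_add_eq' (h₁ x hx)]
  simpa only [← pow_mul, mul_comm] using h₂ x hx

end FiniteField

theorem golomb_permutations_coincide_iff_conjugate_general
    {F : Type*} [Field F] [Fintype F] (p w q : ℕ) (hp : p.Prime) (hq : q = p ^ w)
    (hcard : Fintype.card F = q)
    (g₁ g₂ g₃ g₄ : Fˣ)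
    (hg₁ : ∀ x : Fˣ, x ∈ Subgroup.zpowers g₁)
    (hg₂ : ∀ x : Fˣ, x ∈ Subgroup.zpowers g₂)
    (hg₄ : ∀ x : Fˣ, x ∈ Subgroup.zpowers g₄)
    (π₁ π₂ : ℕ → ℕ)
    (hπ₁ : ∀ x ∈ Set.Icc 1 (q - 2),
      π₁ x ∈ Set.Icc 1 (q - 2) ∧ (g₁ : F) ^ x + (g₂ : F) ^ (π₁ x) = 1)
    (hπ₂ : ∀ x ∈ Set.Icc 1 (q - 2),
      π₂ x ∈ Set.Icc 1 (q - 2) ∧ (g₃ : F) ^ x + (g₄ : F) ^ (π₂ x) = 1) :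
    (∀ x ∈ Set.Icc 1 (q - 2), π₁ x = π₂ x) ↔
      ∃ j < w, g₃ = g₁ ^ (p ^ j) ∧ g₄ = g₂ ^ (p ^ j) := by
  subst hcard
  constructor
  · intro hπ
    obtain ⟨m₁, hm₁, rfl⟩ := exists_ne_zero_pow_eq_of_mem_zpowers (hg₁ g₃)
    obtain ⟨m₂, hm₂, rfl⟩ := exists_ne_zero_pow_eq_of_mem_zpowers (hg₂ g₄)
    have hfh : ∀ a : F, powMonoidWithZeroHom hm₁ a + powMonoidWithZeroHom hm₂ (1 - a) = 1 :=
      FiniteField.pow_add_one_sub_pow_eq_one hg₁ hm₁ hm₂ (fun x hx => (hπ₁ x hx).2)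
        (fun x hx => by simpa [hπ x hx] using (hπ₂ x hx).2)
    obtain ⟨j, hj, hσ⟩ := FiniteField.exists_lt_forall_ringHom_apply_eq_pow hp hq
      (MonoidWithZeroHom.ringHomOfAddMapOneSub _ _ hfh)
    have hpow := MonoidWithZeroHom.eq_of_add_map_one_sub _ _ hfh
    refine ⟨j, hj, Units.ext ?_, Units.ext ?_⟩
    · simpa using hσ g₁
    · simpa using (DFunLike.congr_fun hpow (g₂ : F)).trans (hσ g₂)
  · rintro ⟨j, -, rfl, rfl⟩ x hx
    have : Fact p.Prime := ⟨hp⟩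
    have : CharP F p := charP_of_card_eq_prime_pow hq
    have h₁ := congrArg (iterateFrobenius F p j) (hπ₁ x hx).2
    simp only [map_add, map_pow, map_one, iterateFrobenius_def] at h₁
    have h₂ := (hπ₂ x hx).2
    simp only [Units.val_pow_eq_pow_val] at h₂
    have hIio : Set.Icc 1 (Fintype.card F - 2) ⊆ Set.Iio (Fintype.card F - 1) :=
      fun y hy => by rw [Set.mem_Icc] at hy; rw [Set.mem_Iio]; omega
    exact FiniteField.pow_injOn_Iio_card_sub_one hg₄ (hIio (hπ₁ x hx).1) (hIio (hπ₂ x hx).1)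
      (by simpa using add_left_cancel (h₁.trans h₂.symm))

/-- π_{g₁,g₂} = π_{g₃,g₄} iff (g₃,g₄) = (g₁^{p^j}, g₂^{p^j}) for some j < w. -/
theorem golomb_permutations_coincide_iff_conjugate
    {F : Type*} [Field F] [Fintype F] (p w q : ℕ) (hp : p.Prime) (hq : q = p ^ w)
    (hcard : Fintype.card F = q) (hq2 : 2 < q)
    (g₁ g₂ g₃ g₄ : Fˣ)
    (hg₁ : ∀ x : Fˣ, x ∈ Subgroup.zpowers g₁)
    (hg₂ : ∀ x : Fˣ, x ∈ Subgroup.zpowers g₂)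
    (hg₃ : ∀ x : Fˣ, x ∈ Subgroup.zpowers g₃)
    (hg₄ : ∀ x : Fˣ, x ∈ Subgroup.zpowers g₄)
    (π₁ π₂ : ℕ → ℕ)
    (hπ₁ : ∀ x ∈ Set.Icc 1 (q - 2),
      π₁ x ∈ Set.Icc 1 (q - 2) ∧ (g₁ : F) ^ x + (g₂ : F) ^ (π₁ x) = 1)
    (hπ₂ : ∀ x ∈ Set.Icc 1 (q - 2),
      π₂ x ∈ Set.Icc 1 (q - 2) ∧ (g₃ : F) ^ x + (g₄ : F) ^ (π₂ x) = 1) :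
    (∀ x ∈ Set.Icc 1 (q - 2), π₁ x = π₂ x) ↔
      ∃ j < w, g₃ = g₁ ^ (p ^ j) ∧ g₄ = g₂ ^ (p ^ j) :=
  golomb_permutations_coincide_iff_conjugate_general p w q hp hq hcard g₁ g₂ g₃ g₄ hg₁ hg₂ hg₄ π₁ π₂
    hπ₁ hπ₂
end

section
/- Let F_q be a finite field of characteristic p and let s be an integer with 1 ≤ s ≤ q-2 and gcd(s, q-1) = 1. If the polynomial identity (1 - X)^s = 1 - X^s holds in F_q[X], then s = p^j for some j ≥ 0. -/
open Polynomial

/-- If `p` is prime and `p` divides every interior binomial coefficient `choose s k`,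
then `s` is a power of `p`. -/
lemma aux_p_power (p : ℕ) (hp : p.Prime) : ∀ s : ℕ, 1 ≤ s →
    (∀ k, 0 < k → k < s → p ∣ s.choose k) → ∃ j : ℕ, s = p ^ j := by
  have : Fact p.Prime := ⟨hp⟩
  intro s
  induction s using Nat.strong_induction_on with
  | _ s ih =>
    intro hs1 hdvd
    rcases eq_or_lt_of_le hs1 with h1 | h1
    · exact ⟨0, h1.symm⟩
    -- s ≥ 2; first, p ∣ s since choose s 1 = s
    have hps : p ∣ s := by simpa using hdvd 1 one_pos h1
    obtain ⟨t, rfl⟩ := hps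
    have ht1 : 1 ≤ t := by nlinarith [hp.two_le]
    have htlt : t < p * t := by
      nlinarith [hp.two_le]
    have hdvd' : ∀ k, 0 < k → k < t → p ∣ t.choose k := by
      intro k hk0 hkt
      have hkey := (Choose.choose_modEq_choose_mod_mul_choose_div_nat
          (p := p) (n := p * t) (k := p * k))
      have h0 : (p * t) % p = 0 := Nat.mul_mod_right p t
      have h0' : (p * k) % p = 0 := Nat.mul_mod_right p k
      have hd : (p * t) / p = t := Nat.mul_div_cancel_left t hp.pos
      have hd' : (p * k) / p = k := Nat.mul_div_cancel_left k hp.pos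
      rw [h0, h0', hd, hd'] at hkey
      simp only [Nat.choose_self, one_mul] at hkey
      have hbig : p ∣ (p * t).choose (p * k) :=
        hdvd (p * k) (Nat.mul_pos hp.pos hk0) ((Nat.mul_lt_mul_left hp.pos).mpr hkt)
      have : (p * t).choose (p * k) % p = t.choose k % p := hkey
      rwa [Nat.dvd_iff_mod_eq_zero, this, ← Nat.dvd_iff_mod_eq_zero] at hbig
    obtain ⟨j, rfl⟩ := ih t htlt ht1 hdvd'
    exact ⟨j + 1, by ring⟩

/-- If (1-X)^s = 1 - X^s in F_q[X], 1 ≤ s ≤ q-2, gcd(s,q-1)=1,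
then s = p^j for some j. -/
theorem pow_identity_implies_p_power
    {F : Type*} [Field F] [Fintype F] (p q s : ℕ) [CharP F p]
    (hcard : Fintype.card F = q)
    (hs1 : 1 ≤ s) (hs2 : s ≤ q - 2) (hgcd : Nat.gcd s (q - 1) = 1)
    (h : ((1 - X : F[X])) ^ s = 1 - X ^ s) :
    ∃ j : ℕ, s = p ^ j := by
  have hp : p.Prime := CharP.char_is_prime F p
  apply aux_p_power p hp s hs1
  intro k hk0 hks
  -- substitute X ↦ -X in h
  have h2 : ((1 + X : F[X])) ^ s = 1 - (-X) ^ s := by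
    have := congrArg (aeval (-X : F[X])) h
    simpa [sub_eq_add_neg] using this
  have hc := congrArg (fun f : F[X] => f.coeff k) h2
  simp only [coeff_one_add_X_pow] at hc
  have hrhs : ((-X : F[X]) ^ s).coeff k = 0 := by
    rcases Nat.even_or_odd s with he | ho
    · rw [he.neg_pow, coeff_X_pow]; simp [hks.ne]
    · rw [ho.neg_pow, coeff_neg, coeff_X_pow]; simp [hks.ne]
  have hcast : (s.choose k : F) = 0 := by
    rw [hc, coeff_sub, hrhs, coeff_one, if_neg hk0.ne', sub_zero]
  exact (CharP.cast_eq_zero_iff F p _).mp hcast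
end

section
/- Let q = p^w > 2 be a prime power and suppose integers r, s with gcd(rs, q-1) = 1 satisfy the polynomial identity (1 - X)^s = 1 - X^r in F_q[X]. Then r = s. -/
open Polynomial

/-- If (1-X)^s = 1 - X^r in F_q[X] with gcd(rs, q-1) = 1, then r = s. -/
theorem pow_identity_implies_eq_exponents
    {F : Type*} [Field F] [Fintype F] (p q r s : ℕ) [CharP F p]
    (hp : p.Prime) (hcard : Fintype.card F = q) (hq2 : 2 < q)
    (hr1 : 1 ≤ r) (hr2 : r ≤ q - 2) (hs1 : 1 ≤ s) (hs2 : s ≤ q - 2)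
    (hgcd : Nat.gcd (r * s) (q - 1) = 1)
    (h : ((1 - X : F[X])) ^ s = 1 - X ^ r) :
    r = s := by
  have hdeg := congrArg natDegree h
  have h1 : ((1 - X : F[X])).natDegree = 1 := by
    have : (1 - X : F[X]) = -(X - C 1) := by rw [Polynomial.C_1]; ring
    rw [this, natDegree_neg, natDegree_X_sub_C]
  have hl : ((1 - X : F[X]) ^ s).natDegree = s := by
    rw [natDegree_pow, h1, mul_one]
  have hrr : ((1 - X ^ r : F[X])).natDegree = r := by
    have : (1 - X ^ r : F[X]) = -(X ^ r - C 1) := by rw [Polynomial.C_1]; ring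
    rw [this, natDegree_neg, natDegree_X_pow_sub_C]
  rw [hl, hrr] at hdeg
  omega
end

section
/- Let q > 2 be a prime power, g₁, g₂ primitive elements of F_q, and let π = π_{g₁,g₂} be the Golomb Costas permutation. Then π is a Costas permutation: for all integers k with 1 ≤ k ≤ q - 4 and all 1 ≤ i < j ≤ q - 2 - k, π(i+k) - π(i) ≠ π(j+k) - π(j). -/
/-- The Golomb permutation π is a Costas permutation of {1,...,q-2}. -/
theorem golomb_is_costas
    {F : Type*} [Field F] [Fintype F] (q : ℕ) (hcard : Fintype.card F = q) (hq2 : 2 < q)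
    (g₁ g₂ : Fˣ)
    (hg₁ : ∀ x : Fˣ, x ∈ Subgroup.zpowers g₁)
    (hg₂ : ∀ x : Fˣ, x ∈ Subgroup.zpowers g₂)
    (π : ℕ → ℕ)
    (hbij : Set.BijOn π (Set.Icc 1 (q - 2)) (Set.Icc 1 (q - 2)))
    (hπ : ∀ x ∈ Set.Icc 1 (q - 2), (g₁ : F) ^ x + (g₂ : F) ^ (π x) = 1) :
    ∀ k : ℕ, 1 ≤ k → k ≤ q - 4 →
      ∀ i j : ℕ, 1 ≤ i → i < j → j ≤ q - 2 - k →
        (π (i + k) : ℤ) - π i ≠ (π (j + k) : ℤ) - π j := by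
  intro k hk1 hk2 i j hi hij hj hEq
  have hq5 : 5 ≤ q := by omega
  have hord : orderOf g₁ = q - 1 := by
    rw [orderOf_eq_card_of_forall_mem_zpowers hg₁, Nat.card_units, Nat.card_eq_fintype_card, hcard]
  have hi' : i ∈ Set.Icc 1 (q - 2) := ⟨hi, by omega⟩
  have hj' : j ∈ Set.Icc 1 (q - 2) := ⟨by omega, by omega⟩
  have hik : i + k ∈ Set.Icc 1 (q - 2) := ⟨by omega, by omega⟩
  have hjk : j + k ∈ Set.Icc 1 (q - 2) := ⟨by omega, by omega⟩
  have hsum : π (i + k) + π j = π (j + k) + π i := by omega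
  set a := (g₁ : F) with ha
  set b := (g₂ : F) with hbdef
  have e1 := eq_sub_of_add_eq' (hπ _ hi')
  have e2 := eq_sub_of_add_eq' (hπ _ hj')
  have e3 := eq_sub_of_add_eq' (hπ _ hik)
  have e4 := eq_sub_of_add_eq' (hπ _ hjk)
  have hb : b ^ (π (i + k)) * b ^ (π j) = b ^ (π (j + k)) * b ^ (π i) := by
    rw [← pow_add, ← pow_add, hsum]
  rw [e1, e2, e3, e4, pow_add, pow_add] at hb
  have key : (a ^ i - a ^ j) * (a ^ k - 1) = 0 := by linear_combination -hb
  rcases mul_eq_zero.mp key with h | h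
  · have hpow : g₁ ^ i = g₁ ^ j := by
      apply Units.ext
      rw [Units.val_pow_eq_pow_val, Units.val_pow_eq_pow_val]
      exact sub_eq_zero.mp h
    have hmod := pow_eq_pow_iff_modEq.mp hpow
    rw [hord] at hmod
    have hd : (q - 1) ∣ (j - i) := (Nat.modEq_iff_dvd' (le_of_lt hij)).mp hmod
    have := Nat.le_of_dvd (by omega) hd
    omega
  · have hpow : g₁ ^ k = 1 := by
      apply Units.ext
      rw [Units.val_pow_eq_pow_val]
      simpa using sub_eq_zero.mp h
    have hdvd := orderOf_dvd_of_pow_eq_one hpow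
    rw [hord] at hdvd
    have := Nat.le_of_dvd (by omega) hdvd
    omega
end

section
/- Let q > 2 be a prime power, let g₁, g₂, g₃, g₄ be primitive elements of F_q, and let u, v be integers. Then the cross-correlation C_{π_{g₁,g₂}, π_{g₃,g₄}}(u,v), i.e. the number of x in the common domain with π_{g₁,g₂}(x) + v = π_{g₃,g₄}(x+u), is at most the number of y ∈ F_q \ {1} with g₁^{ru}(1-y)^r = 1 - g₄^v y^s, where g₃ = g₁^r and g₄ = g₂^s with gcd(rs, q-1) = 1. -/
/-- The cross-correlation of two Golomb Costas permutations at (u,v) is at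
most the number of y ∈ F_q \ {1} with g₁^{ru}(1-y)^r = 1 - g₄^v y^s. -/
theorem cross_correlation_le_solution_count
    {F : Type*} [Field F] [Fintype F] (q : ℕ) (hcard : Fintype.card F = q) (hq2 : 2 < q)
    (g₁ g₂ g₃ g₄ : Fˣ)
    (hg₁ : ∀ x : Fˣ, x ∈ Subgroup.zpowers g₁)
    (hg₂ : ∀ x : Fˣ, x ∈ Subgroup.zpowers g₂)
    (r s : ℕ) (hr1 : 1 ≤ r) (hr2 : r < q - 1) (hs1 : 1 ≤ s) (hs2 : s < q - 1)
    (hgcd : Nat.gcd (r * s) (q - 1) = 1)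
    (hg₃ : g₃ = g₁ ^ r) (hg₄ : g₄ = g₂ ^ s)
    (π₁ π₂ : ℤ → ℤ)
    (hπ₁ : ∀ x ∈ Set.Icc (1 : ℤ) ((q : ℤ) - 2),
      π₁ x ∈ Set.Icc (1 : ℤ) ((q : ℤ) - 2) ∧ (g₁ : F) ^ x + (g₂ : F) ^ (π₁ x) = 1)
    (hπ₂ : ∀ x ∈ Set.Icc (1 : ℤ) ((q : ℤ) - 2),
      π₂ x ∈ Set.Icc (1 : ℤ) ((q : ℤ) - 2) ∧ (g₃ : F) ^ x + (g₄ : F) ^ (π₂ x) = 1)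
    (u v : ℤ) :
    {x : ℤ | max 1 (1 - u) ≤ x ∧ x ≤ min ((q : ℤ) - 2) ((q : ℤ) - 2 - u) ∧
        π₁ x + v = π₂ (x + u)}.ncard ≤
      {y : F | y ≠ 1 ∧ (g₁ : F) ^ ((r : ℤ) * u) * (1 - y) ^ r = 1 - (g₄ : F) ^ v * y ^ s}.ncard := by
  have hg1ne : (g₁ : F) ≠ 0 := g₁.ne_zero
  have hg2ne : (g₂ : F) ≠ 0 := g₂.ne_zero
  have hg4ne : (g₄ : F) ≠ 0 := g₄.ne_zero
  have hord : orderOf g₁ = q - 1 := by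
    rw [orderOf_eq_card_of_forall_mem_zpowers hg₁, Nat.card_units, Nat.card_eq_fintype_card, hcard]
  have hq1 : ((q : ℤ) - 1) = ((q - 1 : ℕ) : ℤ) := by
    have : 1 ≤ q := by omega
    push_cast [this]; ring
  apply Set.ncard_le_ncard_of_injOn (fun x => 1 - (g₁ : F) ^ x)
  · rintro x ⟨hx1, hx2, hx3⟩
    have hxI : x ∈ Set.Icc (1:ℤ) ((q:ℤ)-2) :=
      ⟨le_trans (le_max_left _ _) hx1, le_trans hx2 (min_le_left _ _)⟩
    have hxuI : x + u ∈ Set.Icc (1:ℤ) ((q:ℤ)-2) := by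
      constructor
      · have := le_trans (le_max_right _ _) hx1; linarith
      · have := le_trans hx2 (min_le_right _ _); linarith
    obtain ⟨hp1, he1⟩ := hπ₁ x hxI
    obtain ⟨hp2, he2⟩ := hπ₂ (x+u) hxuI
    refine ⟨?_, ?_⟩
    · simp only [ne_eq, sub_eq_self]
      exact zpow_ne_zero _ hg1ne
    · have hy : (g₂:F)^(π₁ x) = 1 - (g₁:F)^x := by linear_combination he1
      have hgg₃ : (g₃ : F) = (g₁ : F) ^ (r : ℤ) := by
        rw [hg₃]; push_cast; rw [zpow_natCast]
      have hgg₄ : (g₄ : F) = (g₂ : F) ^ (s : ℤ) := by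
        rw [hg₄]; push_cast; rw [zpow_natCast]
      have key : (g₃ : F) ^ (x + u) = 1 - (g₄ : F) ^ v * ((g₂:F)^(π₁ x)) ^ s := by
        have h2 : (g₄ : F) ^ (π₂ (x+u)) = (g₄ : F) ^ v * ((g₂:F)^(π₁ x)) ^ s := by
          rw [← hx3, hgg₄, ← zpow_natCast ((g₂:F)^(π₁ x)) s, ← zpow_mul, ← zpow_mul,
            ← zpow_mul, ← zpow_add₀ hg2ne]
          congr 1; ring
        linear_combination he2 - h2
      simp only [sub_sub_cancel]
      calc (g₁ : F) ^ ((r:ℤ) * u) * ((g₁:F) ^ x) ^ r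
          = (g₃ : F) ^ (x + u) := by
            rw [hgg₃, ← zpow_natCast ((g₁:F)^x) r, ← zpow_mul, ← zpow_mul,
              ← zpow_add₀ hg1ne]
            congr 1; ring
        _ = 1 - (g₄ : F) ^ v * ((g₂:F)^(π₁ x)) ^ s := key
        _ = 1 - (g₄ : F) ^ v * (1 - (g₁:F)^x) ^ s := by rw [hy]
  · rintro x₁ ⟨hx11, hx12, -⟩ x₂ ⟨hx21, hx22, -⟩ h
    have h' : (g₁ : F) ^ x₁ = (g₁ : F) ^ x₂ := by
      have := sub_right_injective h; simpa using this
    have hu : g₁ ^ x₁ = g₁ ^ x₂ := by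
      ext; push_cast; exact h'
    have hdvd : ((q - 1 : ℕ) : ℤ) ∣ x₁ - x₂ := by
      rw [← hord, orderOf_dvd_iff_zpow_eq_one, zpow_sub, hu, mul_inv_cancel]
    have hb1 : (1:ℤ) ≤ x₁ := le_trans (le_max_left _ _) hx11
    have hb2 : x₁ ≤ (q:ℤ) - 2 := le_trans hx12 (min_le_left _ _)
    have hb3 : (1:ℤ) ≤ x₂ := le_trans (le_max_left _ _) hx21
    have hb4 : x₂ ≤ (q:ℤ) - 2 := le_trans hx22 (min_le_left _ _)
    have : x₁ - x₂ = 0 := by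
      refine Int.eq_zero_of_abs_lt_dvd hdvd ?_
      rw [← hq1]
      rw [abs_lt]
      constructor <;> linarith
    linarith
end
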